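/- For every positive semidefinite d×d matrix ρ with tr(ρ) = 1: t(ρ) = 1 if and only if h(ρ) = 1. -/

import Mathlib

noncomputable section
open Matrix
open scoped ComplexOrder

variable {d m r : ℕ}

/-- One step of process `i`: `T_i(ρ) = E_i(M₁ ρ M₁†) = ∑_j (E_{i,j} M₁) ρ (E_{i,j} M₁)†`. -/
def Tstep (E : Fin m → Fin r → Matrix (Fin d) (Fin d) ℂ)
    (M1 : Matrix (Fin d) (Fin d) ℂ) (i : Fin m)
    (ρ : Matrix (Fin d) (Fin d) ℂ) : Matrix (Fin d) (Fin d) ℂ :=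
  ∑ j, (E i j * M1) * ρ * (E i j * M1)ᴴ

/-- `T_f` for a word `f = s₁⋯s_n`: apply `T_{s₁}` first, then `T_{s₂}`, …, `T_{s_n}`. -/
def Tword (E : Fin m → Fin r → Matrix (Fin d) (Fin d) ℂ)
    (M1 : Matrix (Fin d) (Fin d) ℂ) (f : List (Fin m))
    (ρ : Matrix (Fin d) (Fin d) ℂ) : Matrix (Fin d) (Fin d) ℂ :=
  f.foldl (fun σ k => Tstep E M1 k σ) ρ

/-- The support of a matrix: its column space, as a subspace of `ℂ^d`. -/
def supp (A : Matrix (Fin d) (Fin d) ℂ) : Submodule ℂ (Fin d → ℂ) :=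
  LinearMap.range (Matrix.toLin' A)

/-- Length-`n` prefix of a schedule. -/
def prefixn (s : ℕ → Fin m) (n : ℕ) : List (Fin m) :=
  List.ofFn (fun i : Fin n => s i)

/-- Termination probability within a word `f`. -/
def tWord (E : Fin m → Fin r → Matrix (Fin d) (Fin d) ℂ)
    (M0 M1 : Matrix (Fin d) (Fin d) ℂ) (f : List (Fin m))
    (ρ : Matrix (Fin d) (Fin d) ℂ) : ℝ :=
  ∑ n ∈ Finset.range (f.length + 1),
    (M0 * Tword E M1 (f.take n) ρ * M0ᴴ).trace.re

/-- Termination probability along a schedule `s`. -/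
def tSched (E : Fin m → Fin r → Matrix (Fin d) (Fin d) ℂ)
    (M0 M1 : Matrix (Fin d) (Fin d) ℂ) (s : ℕ → Fin m)
    (ρ : Matrix (Fin d) (Fin d) ℂ) : ℝ :=
  ∑' n : ℕ, (M0 * Tword E M1 (prefixn s n) ρ * M0ᴴ).trace.re

/-- Termination probability `t(ρ)`: infimum over all schedules. -/
def tInf (E : Fin m → Fin r → Matrix (Fin d) (Fin d) ℂ)
    (M0 M1 : Matrix (Fin d) (Fin d) ℂ)
    (ρ : Matrix (Fin d) (Fin d) ℂ) : ℝ :=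
  ⨅ s : ℕ → Fin m, tSched E M0 M1 s ρ

/-- The reachable space `H_{R(ρ)}`. -/
def HR (E : Fin m → Fin r → Matrix (Fin d) (Fin d) ℂ)
    (M1 : Matrix (Fin d) (Fin d) ℂ)
    (ρ : Matrix (Fin d) (Fin d) ℂ) : Submodule ℂ (Fin d → ℂ) :=
  ⨆ f : List (Fin m), supp (Tword E M1 f ρ)

/-- The average super-operator `T = (1/m) ∑ T_i`. -/
def Tavg (E : Fin m → Fin r → Matrix (Fin d) (Fin d) ℂ)
    (M1 : Matrix (Fin d) (Fin d) ℂ)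
    (ρ : Matrix (Fin d) (Fin d) ℂ) : Matrix (Fin d) (Fin d) ℂ :=
  ((m : ℂ)⁻¹) • ∑ i : Fin m, Tstep E M1 i ρ

/-- `H_{R̄_n(ρ)} = ⋁_{k=0}^n supp(T^k(ρ))`. -/
def HRbar (E : Fin m → Fin r → Matrix (Fin d) (Fin d) ℂ)
    (M1 : Matrix (Fin d) (Fin d) ℂ)
    (ρ : Matrix (Fin d) (Fin d) ℂ) (n : ℕ) : Submodule ℂ (Fin d → ℂ) :=
  ⨆ k : Fin (n + 1), supp ((Tavg E M1)^[k] ρ)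

/-- Reachable termination probability `h(ρ)`. -/
def hProb (E : Fin m → Fin r → Matrix (Fin d) (Fin d) ℂ)
    (M0 M1 : Matrix (Fin d) (Fin d) ℂ)
    (ρ : Matrix (Fin d) (Fin d) ℂ) : ℝ :=
  sInf { x : ℝ | ∃ σ : Matrix (Fin d) (Fin d) ℂ,
    σ.PosSemidef ∧ σ.trace = 1 ∧ supp σ ≤ HR E M1 ρ ∧ x = tInf E M0 M1 σ }

/-- `PD_f`: pure states diverging within the word `f`. -/
def PDword (E : Fin m → Fin r → Matrix (Fin d) (Fin d) ℂ)
    (M0 M1 : Matrix (Fin d) (Fin d) ℂ) (f : List (Fin m)) : Set (Fin d → ℂ) :=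
  { x : Fin d → ℂ | tWord E M0 M1 f (Matrix.vecMulVec x (star x)) = 0 }

/-- `PD_n`: union of `PD_f` over words of length `n`. -/
def PDn (E : Fin m → Fin r → Matrix (Fin d) (Fin d) ℂ)
    (M0 M1 : Matrix (Fin d) (Fin d) ℂ) (n : ℕ) : Set (Fin d → ℂ) :=
  { x : Fin d → ℂ | ∃ f : List (Fin m), f.length = n ∧ x ∈ PDword E M0 M1 f }

/-- `PD`: the diverging pure states. -/
def PD (E : Fin m → Fin r → Matrix (Fin d) (Fin d) ℂ)
    (M0 M1 : Matrix (Fin d) (Fin d) ℂ) : Set (Fin d → ℂ) :=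
  { x : Fin d → ℂ | ∃ s : ℕ → Fin m, tSched E M0 M1 s (Matrix.vecMulVec x (star x)) = 0 }

/-!
Fix a schedule `s`. Summing the identity `tr(M₀ τ M₀†) + tr(T_i τ) = tr τ` along `s` shows
`t_s(ρ) = tr ρ - lim_N tr T_{s(≤N)}(ρ)`, so `t(ρ) = tr ρ` exactly when the mass
`tr T_{s(≤N)}(ρ)` left running vanishes for every schedule `s`.

The vectors `v` with `tr T_{s(≤N)}(v v†) → 0` form a subspace, because
`(v + w)(v + w)† ≤ 2 (v v† + w w†)`. Writing a positive semidefinite `M` as `∑ v_j v_j†` with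
the `v_j` spanning `supp M`, the mass of `M` vanishes along `s` iff `supp M` lies in this subspace.
If `t(ρ) = 1`, the mass of each `T_f(ρ)` vanishes along `s` (run `f`, then `s`), so the whole
reachable space lies in the subspace and every state `σ` supported there has `t(σ) = 1`.
Conversely `ρ` is itself supported in its reachable space, so `h(ρ) ≤ t(ρ) ≤ 1`.
-/

open Filter Topology

theorem tendsto_sum_nhds_zero_iff_of_nonneg {ι α : Type*} [Fintype ι] {l : Filter α}
    {f : ι → α → ℝ} (hf : ∀ i x, 0 ≤ f i x) :
    Tendsto (fun x => ∑ i, f i x) l (𝓝 0) ↔ ∀ i, Tendsto (f i) l (𝓝 0) := by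
  refine ⟨fun h i => squeeze_zero (hf i)
    (fun x => Finset.single_le_sum (fun j _ => hf j x) (Finset.mem_univ i)) h, fun h => ?_⟩
  simpa using tendsto_finsetSum Finset.univ fun i _ => h i

namespace Matrix

variable {n : Type*}

theorem PosSemidef.re_trace_nonneg [Fintype n] {A : Matrix n n ℂ} (hA : A.PosSemidef) :
    0 ≤ A.trace.re :=
  (Complex.nonneg_iff.mp hA.trace_nonneg).1

theorem vecMulVec_add_self_add_vecMulVec_sub_self (v w : n → ℂ) :
    vecMulVec (v + w) (star (v + w)) + vecMulVec (v - w) (star (v - w))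
      = (2 : ℝ) • (vecMulVec v (star v) + vecMulVec w (star w)) := by
  ext a b
  simp only [add_apply, smul_apply, vecMulVec_apply, Pi.add_apply, Pi.sub_apply, Pi.star_apply,
    star_add, star_sub, Complex.real_smul]
  push_cast
  ring

theorem vecMulVec_smul_self (c : ℂ) (v : n → ℂ) :
    vecMulVec (c • v) (star (c • v)) = (Complex.normSq c : ℂ) • vecMulVec v (star v) := by
  ext a b
  simp only [smul_apply, vecMulVec_apply, Pi.smul_apply, Pi.star_apply, star_smul, smul_eq_mul,
    ← Complex.mul_conj, Complex.star_def]
  ring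

end Matrix

theorem Matrix.PosSemidef.exists_eq_sum_vecMulVec_and_supp_eq_span
    {M : Matrix (Fin d) (Fin d) ℂ} (hM : M.PosSemidef) :
    ∃ v : Fin d → Fin d → ℂ,
      M = ∑ j, vecMulVec (v j) (star (v j)) ∧ supp M = Submodule.span ℂ (Set.range v) := by
  -- `M = B† B`, whose support is the column space of `B†`: the two have the same rank.
  open scoped MatrixOrder in
  obtain ⟨B, rfl⟩ := CStarAlgebra.nonneg_iff_eq_star_mul_self.mp hM.nonneg
  rw [star_eq_conjTranspose]
  refine ⟨Bᴴ.col, ?_, ?_⟩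
  · ext a b
    simp [mul_apply, vecMulVec_apply, sum_apply, conjTranspose_apply]
  · have hle : supp (Bᴴ * B) ≤ supp Bᴴ := by
      rw [supp, toLin'_mul]; exact LinearMap.range_comp_le_range _ _
    have hrank : Module.finrank ℂ (supp (Bᴴ * B)) = Module.finrank ℂ (supp Bᴴ) := by
      rw [supp, supp, toLin'_apply', toLin'_apply']
      exact (rank_conjTranspose_mul_self B).trans (rank_conjTranspose B).symm
    rw [Submodule.eq_of_le_of_finrank_eq hle hrank, supp, toLin'_apply', range_mulVecLin]

section VanishingSubspace

variable {n : Type*} [Fintype n]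

theorem re_trace_map_vecMulVec_add_le (Φ : Matrix n n ℂ →ₗ[ℂ] Matrix n n ℂ)
    (hΦ : ∀ A, A.PosSemidef → (Φ A).PosSemidef) (v w : n → ℂ) :
    (Φ (vecMulVec (v + w) (star (v + w)))).trace.re
      ≤ 2 * ((Φ (vecMulVec v (star v))).trace.re + (Φ (vecMulVec w (star w))).trace.re) := by
  have h := congrArg (fun A => (Φ A).trace.re) (vecMulVec_add_self_add_vecMulVec_sub_self v w)
  simp only [map_add, LinearMap.map_smul_of_tower, trace_add, trace_smul, Complex.add_re,
    Complex.smul_re, smul_eq_mul] at h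
  have := (hΦ _ (posSemidef_vecMulVec_self_star (v - w))).re_trace_nonneg
  linarith

theorem re_trace_map_vecMulVec_smul (Φ : Matrix n n ℂ →ₗ[ℂ] Matrix n n ℂ) (c : ℂ)
    (v : n → ℂ) :
    (Φ (vecMulVec (c • v) (star (c • v)))).trace.re
      = Complex.normSq c * (Φ (vecMulVec v (star v))).trace.re := by
  rw [vecMulVec_smul_self, map_smul, trace_smul, smul_eq_mul, Complex.re_ofReal_mul]

def vanishingSubspace (Φ : ℕ → Matrix n n ℂ →ₗ[ℂ] Matrix n n ℂ)
    (hΦ : ∀ N A, A.PosSemidef → (Φ N A).PosSemidef) : Submodule ℂ (n → ℂ) where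
  carrier := {v | Tendsto (fun N => (Φ N (vecMulVec v (star v))).trace.re) atTop (𝓝 0)}
  zero_mem' := by simp
  add_mem' {v w} hv hw := by
    refine squeeze_zero (fun N => (hΦ N _ (posSemidef_vecMulVec_self_star _)).re_trace_nonneg)
      (fun N => re_trace_map_vecMulVec_add_le (Φ N) (hΦ N) v w) ?_
    simpa using (hv.add hw).const_mul 2
  smul_mem' c v hv := by
    change Tendsto (fun N => (Φ N (vecMulVec (c • v) (star (c • v)))).trace.re) atTop (𝓝 0)
    simp_rw [re_trace_map_vecMulVec_smul]
    simpa using hv.const_mul (Complex.normSq c)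

end VanishingSubspace

theorem supp_le_vanishingSubspace_iff
    (Φ : ℕ → Matrix (Fin d) (Fin d) ℂ →ₗ[ℂ] Matrix (Fin d) (Fin d) ℂ)
    (hΦ : ∀ N A, A.PosSemidef → (Φ N A).PosSemidef) {M : Matrix (Fin d) (Fin d) ℂ}
    (hM : M.PosSemidef) :
    supp M ≤ vanishingSubspace Φ hΦ ↔
      Tendsto (fun N => (Φ N M).trace.re) atTop (𝓝 0) := by
  obtain ⟨v, rfl, hspan⟩ := hM.exists_eq_sum_vecMulVec_and_supp_eq_span
  simp only [hspan, Submodule.span_le, Set.range_subset_iff, map_sum, trace_sum, Complex.re_sum]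
  rw [tendsto_sum_nhds_zero_iff_of_nonneg fun _ N =>
    (hΦ N _ (posSemidef_vecMulVec_self_star _)).re_trace_nonneg]
  rfl

theorem prefixn_eq_take (s : Stream' (Fin m)) (n : ℕ) : prefixn s n = s.take n := by
  refine List.ext_getElem (by simp [prefixn, Stream'.length_take]) fun i _ _ => ?_
  simp [prefixn, Stream'.take_get, Stream'.get]

theorem prefixn_succ (s : ℕ → Fin m) (n : ℕ) : prefixn s (n + 1) = prefixn s n ++ [s n] := by
  rw [prefixn_eq_take s, prefixn_eq_take s]
  exact Stream'.take_succ' n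

theorem prefixn_appendStream' (f : List (Fin m)) (s : ℕ → Fin m) (n : ℕ) :
    prefixn (f ++ₛ s) (f.length + n) = f ++ prefixn s n := by
  rw [prefixn_eq_take, prefixn_eq_take s]
  exact (Stream'.append_take ..).symm

section Program

variable (E : Fin m → Fin r → Matrix (Fin d) (Fin d) ℂ) (M0 M1 : Matrix (Fin d) (Fin d) ℂ)

theorem Tstep_posSemidef (i : Fin m) {ρ : Matrix (Fin d) (Fin d) ℂ} (hρ : ρ.PosSemidef) :
    (Tstep E M1 i ρ).PosSemidef :=
  posSemidef_sum _ fun _ _ => hρ.mul_mul_conjTranspose_same _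

theorem Tstep_add (i : Fin m) (σ τ : Matrix (Fin d) (Fin d) ℂ) :
    Tstep E M1 i (σ + τ) = Tstep E M1 i σ + Tstep E M1 i τ := by
  simp [Tstep, Matrix.mul_add, Matrix.add_mul, Finset.sum_add_distrib]

theorem Tstep_smul (i : Fin m) (c : ℂ) (ρ : Matrix (Fin d) (Fin d) ℂ) :
    Tstep E M1 i (c • ρ) = c • Tstep E M1 i ρ := by
  simp [Tstep, Finset.smul_sum]

theorem Tword_cons (i : Fin m) (f : List (Fin m)) (ρ : Matrix (Fin d) (Fin d) ℂ) :
    Tword E M1 (i :: f) ρ = Tword E M1 f (Tstep E M1 i ρ) := rfl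

theorem Tword_singleton (i : Fin m) (ρ : Matrix (Fin d) (Fin d) ℂ) :
    Tword E M1 [i] ρ = Tstep E M1 i ρ := rfl

theorem Tword_append (f g : List (Fin m)) (ρ : Matrix (Fin d) (Fin d) ℂ) :
    Tword E M1 (f ++ g) ρ = Tword E M1 g (Tword E M1 f ρ) := by
  simp [Tword, List.foldl_append]

theorem Tword_posSemidef (f : List (Fin m)) {ρ : Matrix (Fin d) (Fin d) ℂ}
    (hρ : ρ.PosSemidef) :
    (Tword E M1 f ρ).PosSemidef := by
  induction f generalizing ρ with
  | nil => exact hρ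
  | cons i f ih => exact ih (Tstep_posSemidef E M1 i hρ)

theorem Tword_add (f : List (Fin m)) (σ τ : Matrix (Fin d) (Fin d) ℂ) :
    Tword E M1 f (σ + τ) = Tword E M1 f σ + Tword E M1 f τ := by
  induction f generalizing σ τ with
  | nil => rfl
  | cons i f ih => rw [Tword_cons, Tstep_add, ih]; rfl

theorem Tword_smul (f : List (Fin m)) (c : ℂ) (ρ : Matrix (Fin d) (Fin d) ℂ) :
    Tword E M1 f (c • ρ) = c • Tword E M1 f ρ := by
  induction f generalizing ρ with
  | nil => rfl
  | cons i f ih => rw [Tword_cons, Tstep_smul, ih]; rfl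

def TwordLin (f : List (Fin m)) :
    Matrix (Fin d) (Fin d) ℂ →ₗ[ℂ] Matrix (Fin d) (Fin d) ℂ where
  toFun := Tword E M1 f
  map_add' := Tword_add E M1 f
  map_smul' := Tword_smul E M1 f

theorem trace_Tstep (hE : ∀ i, ∑ j, (E i j)ᴴ * E i j = 1) (i : Fin m)
    (τ : Matrix (Fin d) (Fin d) ℂ) : (Tstep E M1 i τ).trace = (M1 * τ * M1ᴴ).trace := calc
  (Tstep E M1 i τ).trace = ∑ j, ((E i j)ᴴ * E i j * (M1 * τ * M1ᴴ)).trace := by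
    simp only [Tstep, trace_sum, conjTranspose_mul]
    refine Finset.sum_congr rfl fun j _ => ?_
    rw [Matrix.mul_assoc _ (E i j), trace_mul_comm (E i j)ᴴ]
    simp only [Matrix.mul_assoc]
  _ = (M1 * τ * M1ᴴ).trace := by rw [← trace_sum, ← Finset.sum_mul, hE, Matrix.one_mul]

theorem trace_M0_add_trace_Tstep (hE : ∀ i, ∑ j, (E i j)ᴴ * E i j = 1)
    (hM : M0ᴴ * M0 + M1ᴴ * M1 = 1) (i : Fin m) (τ : Matrix (Fin d) (Fin d) ℂ) :
    (M0 * τ * M0ᴴ).trace + (Tstep E M1 i τ).trace = τ.trace := by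
  rw [trace_Tstep E M1 hE, trace_mul_cycle M0, trace_mul_cycle M1, ← trace_add,
    ← Matrix.add_mul, hM, Matrix.one_mul]

theorem sum_range_re_trace_M0_Tword_prefixn (hE : ∀ i, ∑ j, (E i j)ᴴ * E i j = 1)
    (hM : M0ᴴ * M0 + M1ᴴ * M1 = 1) (s : ℕ → Fin m) (ρ : Matrix (Fin d) (Fin d) ℂ)
    (N : ℕ) :
    ∑ n ∈ Finset.range N, (M0 * Tword E M1 (prefixn s n) ρ * M0ᴴ).trace.re
      = ρ.trace.re - (Tword E M1 (prefixn s N) ρ).trace.re := by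
  induction N with
  | zero => simp [prefixn, Tword]
  | succ N ih =>
    have hstep := congrArg Complex.re
      (trace_M0_add_trace_Tstep E M0 M1 hE hM (s N) (Tword E M1 (prefixn s N) ρ))
    rw [Complex.add_re] at hstep
    rw [Finset.sum_range_succ, ih, prefixn_succ, Tword_append, Tword_singleton]
    linarith

theorem tendsto_re_trace_Tword_prefixn (hE : ∀ i, ∑ j, (E i j)ᴴ * E i j = 1)
    (hM : M0ᴴ * M0 + M1ᴴ * M1 = 1) (s : ℕ → Fin m) {ρ : Matrix (Fin d) (Fin d) ℂ}
    (hρ : ρ.PosSemidef) :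
    Tendsto (fun N => (Tword E M1 (prefixn s N) ρ).trace.re) atTop
      (𝓝 (ρ.trace.re - tSched E M0 M1 s ρ)) := by
  have hsum := sum_range_re_trace_M0_Tword_prefixn E M0 M1 hE hM s ρ
  have hmass N := (Tword_posSemidef E M1 (prefixn s N) hρ).re_trace_nonneg
  have hsummable : Summable fun n => (M0 * Tword E M1 (prefixn s n) ρ * M0ᴴ).trace.re :=
    summable_of_sum_range_le
      (fun n => ((Tword_posSemidef E M1 _ hρ).mul_mul_conjTranspose_same M0).re_trace_nonneg)
      (fun N => by linarith [hsum N, hmass N])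
  simpa [hsum, tSched] using
    (tendsto_const_nhds (x := ρ.trace.re)).sub hsummable.hasSum.tendsto_sum_nat

theorem tSched_nonneg (s : ℕ → Fin m) {ρ : Matrix (Fin d) (Fin d) ℂ} (hρ : ρ.PosSemidef) :
    0 ≤ tSched E M0 M1 s ρ :=
  tsum_nonneg fun _ => ((Tword_posSemidef E M1 _ hρ).mul_mul_conjTranspose_same M0).re_trace_nonneg

theorem tSched_le_re_trace (hE : ∀ i, ∑ j, (E i j)ᴴ * E i j = 1)
    (hM : M0ᴴ * M0 + M1ᴴ * M1 = 1) (s : ℕ → Fin m) {ρ : Matrix (Fin d) (Fin d) ℂ}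
    (hρ : ρ.PosSemidef) : tSched E M0 M1 s ρ ≤ ρ.trace.re :=
  sub_nonneg.mp <| ge_of_tendsto' (tendsto_re_trace_Tword_prefixn E M0 M1 hE hM s hρ)
    fun N => (Tword_posSemidef E M1 (prefixn s N) hρ).re_trace_nonneg

theorem tInf_nonneg {ρ : Matrix (Fin d) (Fin d) ℂ} (hρ : ρ.PosSemidef) :
    0 ≤ tInf E M0 M1 ρ :=
  Real.iInf_nonneg fun s => tSched_nonneg E M0 M1 s hρ

theorem tInf_le_tSched (s : ℕ → Fin m) {ρ : Matrix (Fin d) (Fin d) ℂ} (hρ : ρ.PosSemidef) :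
    tInf E M0 M1 ρ ≤ tSched E M0 M1 s ρ :=
  ciInf_le ⟨0, Set.forall_mem_range.2 fun s => tSched_nonneg E M0 M1 s hρ⟩ s

theorem tInf_le_re_trace (hm : 0 < m) (hE : ∀ i, ∑ j, (E i j)ᴴ * E i j = 1)
    (hM : M0ᴴ * M0 + M1ᴴ * M1 = 1) {ρ : Matrix (Fin d) (Fin d) ℂ} (hρ : ρ.PosSemidef) :
    tInf E M0 M1 ρ ≤ ρ.trace.re :=
  (tInf_le_tSched E M0 M1 (fun _ => ⟨0, hm⟩) hρ).trans (tSched_le_re_trace E M0 M1 hE hM _ hρ)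

theorem tInf_eq_re_trace_iff (hm : 0 < m) (hE : ∀ i, ∑ j, (E i j)ᴴ * E i j = 1)
    (hM : M0ᴴ * M0 + M1ᴴ * M1 = 1) {ρ : Matrix (Fin d) (Fin d) ℂ} (hρ : ρ.PosSemidef) :
    tInf E M0 M1 ρ = ρ.trace.re ↔
      ∀ s, Tendsto (fun N => (Tword E M1 (prefixn s N) ρ).trace.re) atTop (𝓝 0) := by
  have hlim s := tendsto_re_trace_Tword_prefixn E M0 M1 hE hM s hρ
  constructor
  · intro ht s
    have hs : tSched E M0 M1 s ρ = ρ.trace.re :=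
      le_antisymm (tSched_le_re_trace E M0 M1 hE hM s hρ) (ht ▸ tInf_le_tSched E M0 M1 s hρ)
    simpa [hs] using hlim s
  · intro h
    have hs s : tSched E M0 M1 s ρ = ρ.trace.re := by
      linarith [tendsto_nhds_unique (hlim s) (h s)]
    have : Nonempty (ℕ → Fin m) := ⟨fun _ => ⟨0, hm⟩⟩
    simp only [tInf, hs, ciInf_const]

theorem HR_le_vanishingSubspace {ρ : Matrix (Fin d) (Fin d) ℂ} (hρ : ρ.PosSemidef)
    (h : ∀ s, Tendsto (fun N => (Tword E M1 (prefixn s N) ρ).trace.re) atTop (𝓝 0))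
    (s : ℕ → Fin m) :
    HR E M1 ρ ≤ vanishingSubspace (fun N => TwordLin E M1 (prefixn s N))
      (fun _ _ hA => Tword_posSemidef E M1 _ hA) := by
  refine iSup_le fun f => (supp_le_vanishingSubspace_iff _ _ (Tword_posSemidef E M1 f hρ)).mpr ?_
  refine ((h (f ++ₛ s)).comp (tendsto_add_atTop_nat f.length)).congr fun N => ?_
  simp [TwordLin, Nat.add_comm N, prefixn_appendStream', Tword_append]

theorem tInf_eq_re_trace_of_supp_le_HR (hm : 0 < m) (hE : ∀ i, ∑ j, (E i j)ᴴ * E i j = 1)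
    (hM : M0ᴴ * M0 + M1ᴴ * M1 = 1) {ρ σ : Matrix (Fin d) (Fin d) ℂ} (hρ : ρ.PosSemidef)
    (ht : tInf E M0 M1 ρ = ρ.trace.re) (hσ : σ.PosSemidef) (hsupp : supp σ ≤ HR E M1 ρ) :
    tInf E M0 M1 σ = σ.trace.re := by
  refine (tInf_eq_re_trace_iff E M0 M1 hm hE hM hσ).mpr fun s => ?_
  have hvanish :=
    HR_le_vanishingSubspace E M1 hρ ((tInf_eq_re_trace_iff E M0 M1 hm hE hM hρ).mp ht) s
  exact (supp_le_vanishingSubspace_iff (fun N => TwordLin E M1 (prefixn s N)) _ hσ).mp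
    (hsupp.trans hvanish)

theorem hProb_le_tInf {ρ : Matrix (Fin d) (Fin d) ℂ} (hρ : ρ.PosSemidef) (htr : ρ.trace = 1) :
    hProb E M0 M1 ρ ≤ tInf E M0 M1 ρ := by
  refine csInf_le ⟨0, ?_⟩ ⟨ρ, hρ, htr, le_iSup (fun f => supp (Tword E M1 f ρ)) [], rfl⟩
  rintro _ ⟨σ, hσ, -, -, rfl⟩
  exact tInf_nonneg E M0 M1 hσ

theorem hProb_eq_one_of_tInf_eq_one (hm : 0 < m) (hE : ∀ i, ∑ j, (E i j)ᴴ * E i j = 1)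
    (hM : M0ᴴ * M0 + M1ᴴ * M1 = 1) {ρ : Matrix (Fin d) (Fin d) ℂ} (hρ : ρ.PosSemidef)
    (htr : ρ.trace = 1) (ht : tInf E M0 M1 ρ = 1) : hProb E M0 M1 ρ = 1 := by
  refine le_antisymm (ht ▸ hProb_le_tInf E M0 M1 hρ htr)
    (le_csInf ⟨_, ρ, hρ, htr, le_iSup (fun f => supp (Tword E M1 f ρ)) [], rfl⟩ ?_)
  rintro _ ⟨σ, hσ, htrσ, hsupp, rfl⟩
  have := tInf_eq_re_trace_of_supp_le_HR E M0 M1 hm hE hM hρ (by simp [ht, htr]) hσ hsupp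
  simp [this, htrσ]

end Program

theorem terminating_iff_reachable_termination_one_general (d m r : ℕ) (hm : 0 < m)
    (E : Fin m → Fin r → Matrix (Fin d) (Fin d) ℂ)
    (hE : ∀ i, ∑ j, (E i j)ᴴ * E i j = 1)
    (M0 M1 : Matrix (Fin d) (Fin d) ℂ)
    (hM : M0ᴴ * M0 + M1ᴴ * M1 = 1)
    (ρ : Matrix (Fin d) (Fin d) ℂ) (hρ : ρ.PosSemidef) (htr : ρ.trace = 1) :
    tInf E M0 M1 ρ = 1 ↔ hProb E M0 M1 ρ = 1 := by
  refine ⟨hProb_eq_one_of_tInf_eq_one E M0 M1 hm hE hM hρ htr, fun hh => le_antisymm ?_ ?_⟩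
  · simpa [htr] using tInf_le_re_trace E M0 M1 hm hE hM hρ
  · exact hh ▸ hProb_le_tInf E M0 M1 hρ htr

/-- `t(ρ) = 1` iff `h(ρ) = 1`. -/
theorem terminating_iff_reachable_termination_one (d m r : ℕ) (hd : 0 < d) (hm : 0 < m)
    (E : Fin m → Fin r → Matrix (Fin d) (Fin d) ℂ)
    (hE : ∀ i, ∑ j, (E i j)ᴴ * E i j = 1)
    (M0 M1 : Matrix (Fin d) (Fin d) ℂ)
    (hM : M0ᴴ * M0 + M1ᴴ * M1 = 1)
    (ρ : Matrix (Fin d) (Fin d) ℂ) (hρ : ρ.PosSemidef) (htr : ρ.trace = 1) :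
    tInf E M0 M1 ρ = 1 ↔ hProb E M0 M1 ρ = 1 :=
  terminating_iff_reachable_termination_one_general d m r hm E hE M0 M1 hM ρ hρ htr
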